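/- One-shot Heegard–Berger/Kaspi achievability: Let q_{S,Y} be a pmf on finite sets 𝒮 × 𝒴 (source and side information), let d₁ : 𝒮 × Ŝ₁ → [0,∞) and d₂ : 𝒮 × Ŝ₂ → [0,∞) be distortion measures with levels D₁, D₂ ≥ 0. For any conditional pmf q_{W,U|S} to finite sets 𝒲 × 𝒰, any reconstruction functions ŝ₁ : 𝒲 → Ŝ₁ and ŝ₂ : 𝒲 × 𝒰 × 𝒴 → Ŝ₂, and positive integers M₁, M₂, J₂ with M = M₁·M₂ and J₂ ≥ M₂, define q(s,y,w,u) = q(s,y)·q(w,u|s). Then there exists an M-code whose probability of no-excess distortion satisfies P[ d₁(S,Ŝ₁) ≤ D₁ and d₂(S,Ŝ₂) ≤ D₂ ] ≥ E_q [ 1{ d₁(S, ŝ₁(W)) ≤ D₁ and d₂(S, ŝ₂(W,U,Y)) ≤ D₂ } / ( (1 + M₁^{−1}·2^{i_q(S;W)} + (M₁J₂)^{−1}·2^{i_q(S;W,U)}) · (1 + J₂M₂^{−1}·2^{−i_q(Y;U|W)}) ) ]. -/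

import Mathlib

open scoped BigOperators

/-- A pmf on a finite type, represented by a nonnegative real-valued function summing to 1. -/
structure FinPMF (α : Type) [Fintype α] where
  p : α → ℝ
  nonneg : ∀ a, 0 ≤ p a
  sum_eq_one : ∑ a, p a = 1

open Classical in
/-- Indicator of a proposition, as a real number. -/
noncomputable def ind (P : Prop) : ℝ := if P then 1 else 0

variable {S Y W U R1 R2 : Type}
  [Fintype S] [Fintype Y] [Fintype W] [Fintype U] [Fintype R1] [Fintype R2]

/-- The joint pmf `q(s,y,w,u) = q(s,y) q(w,u|s)`. -/
noncomputable def qHB (qSY : FinPMF (S × Y)) (qWU : S → FinPMF (W × U))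
    (s : S) (y : Y) (w : W) (u : U) : ℝ :=
  qSY.p (s, y) * (qWU s).p (w, u)

noncomputable def mS (qSY : FinPMF (S × Y)) (s : S) : ℝ :=
  ∑ y : Y, qSY.p (s, y)

noncomputable def mSW (qSY : FinPMF (S × Y)) (qWU : S → FinPMF (W × U))
    (s : S) (w : W) : ℝ :=
  mS qSY s * ∑ u : U, (qWU s).p (w, u)

noncomputable def mW (qSY : FinPMF (S × Y)) (qWU : S → FinPMF (W × U)) (w : W) : ℝ :=
  ∑ s : S, mSW qSY qWU s w

noncomputable def mSWU (qSY : FinPMF (S × Y)) (qWU : S → FinPMF (W × U))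
    (s : S) (w : W) (u : U) : ℝ :=
  mS qSY s * (qWU s).p (w, u)

noncomputable def mWU (qSY : FinPMF (S × Y)) (qWU : S → FinPMF (W × U))
    (w : W) (u : U) : ℝ :=
  ∑ s : S, mSWU qSY qWU s w u

noncomputable def mYW (qSY : FinPMF (S × Y)) (qWU : S → FinPMF (W × U))
    (y : Y) (w : W) : ℝ :=
  ∑ s : S, ∑ u : U, qHB qSY qWU s y w u

noncomputable def mYUW (qSY : FinPMF (S × Y)) (qWU : S → FinPMF (W × U))
    (y : Y) (u : U) (w : W) : ℝ :=
  ∑ s : S, qHB qSY qWU s y w u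

/-- Information density `i_q(S;W)`. -/
noncomputable def iSW (qSY : FinPMF (S × Y)) (qWU : S → FinPMF (W × U))
    (s : S) (w : W) : ℝ :=
  Real.logb 2 (mSW qSY qWU s w / (mS qSY s * mW qSY qWU w))

/-- Information density `i_q(S;W,U)`, treating `(W,U)` as a single variable. -/
noncomputable def iSWU (qSY : FinPMF (S × Y)) (qWU : S → FinPMF (W × U))
    (s : S) (w : W) (u : U) : ℝ :=
  Real.logb 2 (mSWU qSY qWU s w u / (mS qSY s * mWU qSY qWU w u))

/-- Conditional information density `i_q(Y;U|W)`. -/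
noncomputable def iYUcW (qSY : FinPMF (S × Y)) (qWU : S → FinPMF (W × U))
    (y : Y) (u : U) (w : W) : ℝ :=
  Real.logb 2 (mYUW qSY qWU y u w * mW qSY qWU w / (mYW qSY qWU y w * mWU qSY qWU w u))

/-- Probability of no-excess distortion `P[d₁(S,Ŝ₁) ≤ D₁ and d₂(S,Ŝ₂) ≤ D₂]` of an
`M`-code for lossy source coding when side information may be absent:
`Ŝ₁ = ψ₁(φ(S))`, `Ŝ₂ = ψ₂(φ(S), Y)` with stochastic encoder/decoders. -/
noncomputable def pNoExcessHB (M : ℕ) (qSY : FinPMF (S × Y))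
    (d1 : S → R1 → ℝ) (d2 : S → R2 → ℝ) (D1 D2 : ℝ)
    (enc : S → FinPMF (Fin M)) (dec1 : Fin M → FinPMF R1)
    (dec2 : Fin M → Y → FinPMF R2) : ℝ :=
  ∑ s : S, ∑ y : Y, ∑ m : Fin M, ∑ r1 : R1, ∑ r2 : R2,
    qSY.p (s, y) * (enc s).p m * (dec1 m).p r1 * (dec2 m y).p r2 *
      ind (d1 s r1 ≤ D1 ∧ d2 s r2 ≤ D2)


/-!
Random binning with a likelihood encoder. The random codebook has `M1` independent clusters, each
a `w ∼ q_W` together with `J2` conditionally independent `u ∼ q(· | w)`, and every position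
`j ∈ [J2]` is thrown into a uniform bin in `[M2]`. The encoder picks codeword `x = (w_i, u_ij)`
with probability `q(s | x) / N_E(s)` and sends `(i, bin j)`; decoder 1 outputs `ŝ₁(w_i)`, and
decoder 2 picks `j'` in the received bin with probability `q(y | w_i, u_ij') / N_D(y)`. Counting
only the event that decoder 2 recovers `j`, a fixed codebook has no excess distortion with
probability at least `∑ q(s, y) · q(s | x) / N_E(s) · q(y | x) / N_D(y) · 1{x meets D₁, D₂}`.
Given that a codeword is `x = (w, u)`, the normalizers have means at most
`q(s | x) + J2 q(s | w) + M1 J2 q(s)` and `q(y | x) + (J2 / M2) q(y | w)`, so Jensen's inequality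
for the convex map `(a, b) ↦ (a b)⁻¹` bounds the average over codebooks from below. Written with
information densities this is the claimed bound, and some codebook does at least as well as the
average.
-/

open Finset

lemma ind_nonneg (P : Prop) : 0 ≤ ind P := by
  unfold ind; split_ifs <;> norm_num

lemma ind_of_true {P : Prop} (h : P) : ind P = 1 := if_pos h

lemma ind_of_false {P : Prop} (h : ¬P) : ind P = 0 := if_neg h

lemma ind_and (P Q : Prop) : ind (P ∧ Q) = ind P * ind Q := by
  unfold ind; split_ifs <;> simp_all

lemma sum_ind_eq_mul {α : Type} [Fintype α] (a : α) (f : α → ℝ) :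
    ∑ x, ind (a = x) * f x = f a := by
  classical
  simp [ind, Finset.sum_ite_eq]

lemma sum_ind_eq_mul' {α : Type} [Fintype α] (a : α) (f : α → ℝ) :
    ∑ x, ind (x = a) * f x = f a := by
  classical
  simp [ind, Finset.sum_ite_eq']

lemma ind_prod_mk_eq {α β : Type} (a c : α) (b d : β) :
    ind ((a, b) = (c, d)) = ind (a = c) * ind (b = d) := by
  rw [← ind_and, Prod.mk.injEq]

lemma of_mul_ind_pos {a : ℝ} {P : Prop} (h : 0 < a * ind P) : P := by
  by_contra hP
  simp [ind_of_false hP] at h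

namespace FinPMF

variable {α β ι : Type} [Fintype α] [Fintype β]

lemma nonempty (P : FinPMF α) : Nonempty α := by
  by_contra h
  simpa [not_nonempty_iff.mp h] using P.sum_eq_one

def expect (P : FinPMF α) (f : α → ℝ) : ℝ := ∑ a, P.p a * f a

lemma expect_nonneg (P : FinPMF α) {f : α → ℝ} (hf : ∀ a, 0 ≤ f a) : 0 ≤ P.expect f :=
  sum_nonneg fun a _ => mul_nonneg (P.nonneg a) (hf a)

lemma expect_mono (P : FinPMF α) {f g : α → ℝ} (h : ∀ a, f a ≤ g a) :
    P.expect f ≤ P.expect g :=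
  sum_le_sum fun a _ => mul_le_mul_of_nonneg_left (h a) (P.nonneg a)

lemma expect_const (P : FinPMF α) (c : ℝ) : P.expect (fun _ => c) = c := by
  simp [expect, ← sum_mul, P.sum_eq_one]

lemma expect_const_mul (P : FinPMF α) (c : ℝ) (f : α → ℝ) :
    P.expect (fun a => c * f a) = c * P.expect f := by
  simp only [expect, mul_sum, mul_left_comm]

lemma expect_sum (P : FinPMF α) (s : Finset ι) (f : ι → α → ℝ) :
    P.expect (fun a => ∑ i ∈ s, f i a) = ∑ i ∈ s, P.expect (f i) := by
  simp only [expect, mul_sum]; exact sum_comm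

lemma expect_ind_eq (P : FinPMF α) (b : α) : P.expect (fun a => ind (a = b)) = P.p b := by
  simp only [expect, mul_comm (P.p _)]; exact sum_ind_eq_mul' b P.p

lemma single_mul_le_expect (P : FinPMF α) {f : α → ℝ} (hf : ∀ a, 0 ≤ f a) (a : α) :
    P.p a * f a ≤ P.expect f :=
  single_le_sum (f := fun a => P.p a * f a) (fun a _ => mul_nonneg (P.nonneg a) (hf a))
    (mem_univ a)

lemma exists_expect_le (P : FinPMF α) (f : α → ℝ) : ∃ a, P.expect f ≤ f a := by
  have := P.nonempty
  obtain ⟨a, -, ha⟩ := exists_max_image univ f univ_nonempty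
  refine ⟨a, ?_⟩
  calc P.expect f ≤ P.expect (fun _ => f a) := P.expect_mono fun b => ha b (mem_univ b)
    _ = f a := P.expect_const _

open Classical in
noncomputable def pure (a : α) : FinPMF α where
  p b := if b = a then 1 else 0
  nonneg b := by split_ifs <;> norm_num
  sum_eq_one := by simp

lemma expect_pure (a : α) (f : α → ℝ) : (pure a).expect f = f a := by
  classical
  simp [expect, pure]

open Classical in
noncomputable def map (f : α → β) (P : FinPMF α) : FinPMF β where
  p b := ∑ a, if f a = b then P.p a else 0
  nonneg b := sum_nonneg fun a _ => by split_ifs <;> simp [P.nonneg a]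
  sum_eq_one := by rw [sum_comm]; simp [P.sum_eq_one]

lemma expect_map (f : α → β) (P : FinPMF α) (g : β → ℝ) :
    (P.map f).expect g = P.expect (fun a => g (f a)) := by
  classical
  simp only [expect, map, sum_mul, ite_mul, zero_mul]
  rw [sum_comm]
  simp

noncomputable def uniform [Nonempty α] : FinPMF α where
  p _ := (Fintype.card α : ℝ)⁻¹
  nonneg _ := by positivity
  sum_eq_one := by simp

lemma uniform_apply [Nonempty α] (a : α) : (uniform : FinPMF α).p a = (Fintype.card α : ℝ)⁻¹ :=
  rfl

/-- `h` rescaled to a pmf; the uniform pmf when `h` cannot be normalized. -/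
noncomputable def normalize [Nonempty α] (h : α → ℝ) : FinPMF α :=
  if H : (∀ a, 0 ≤ h a) ∧ 0 < ∑ a, h a then
    { p := fun a => h a / ∑ b, h b
      nonneg := fun a => div_nonneg (H.1 a) H.2.le
      sum_eq_one := by rw [← sum_div, div_self H.2.ne'] }
  else uniform

section Normalize

variable [Nonempty α] {h : α → ℝ}

lemma sum_mul_normalize_apply (hh : ∀ a, 0 ≤ h a) (a : α) :
    (∑ b, h b) * (normalize h).p a = h a := by
  rcases (sum_nonneg fun b _ => hh b).eq_or_lt with h0 | hpos
  · rw [← h0, zero_mul]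
    exact ((sum_eq_zero_iff_of_nonneg fun b _ => hh b).mp h0.symm a (mem_univ a)).symm
  · simp only [normalize, dif_pos (And.intro hh hpos)]
    field_simp

lemma div_sum_le_normalize_apply (hh : ∀ a, 0 ≤ h a) (a : α) :
    h a / ∑ b, h b ≤ (normalize h).p a := by
  rw [← sum_mul_normalize_apply hh a]
  rcases eq_or_ne (∑ b, h b) 0 with h0 | h0
  · simp [h0, (normalize h).nonneg a]
  · rw [mul_div_cancel_left₀ _ h0]

lemma expect_normalize_div (hh : ∀ a, 0 ≤ h a) {n : α → ℝ} (hn : ∀ a, h a = 0 → n a = 0) :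
    (normalize h).expect (fun a => n a / h a) = (∑ a, n a) / ∑ a, h a := by
  rcases eq_or_ne (∑ b, h b) 0 with h0 | h0
  · have hz : ∀ a, h a = 0 := fun a =>
      (sum_eq_zero_iff_of_nonneg fun b _ => hh b).mp h0 a (mem_univ a)
    simp [expect, hz]
  · rw [eq_div_iff h0, mul_comm, expect, mul_sum]
    refine sum_congr rfl fun a _ => ?_
    rw [← mul_assoc, sum_mul_normalize_apply hh, mul_div_cancel_of_imp' (hn a)]

lemma sum_div_sum_mul_le_expect_normalize {f : α → ℝ} (hh : ∀ a, 0 ≤ h a) (hf : ∀ a, 0 ≤ f a) :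
    ∑ a, h a / (∑ b, h b) * f a ≤ (normalize h).expect f :=
  sum_le_sum fun a _ => mul_le_mul_of_nonneg_right (div_sum_le_normalize_apply hh a) (hf a)

end Normalize

def compProd (P : FinPMF α) (K : α → FinPMF β) : FinPMF (α × β) where
  p x := P.p x.1 * (K x.1).p x.2
  nonneg x := mul_nonneg (P.nonneg _) ((K _).nonneg _)
  sum_eq_one := by simp [Fintype.sum_prod_type, ← mul_sum, (K _).sum_eq_one, P.sum_eq_one]

lemma expect_compProd (P : FinPMF α) (K : α → FinPMF β) (f : α × β → ℝ) :
    (P.compProd K).expect f = P.expect (fun a => (K a).expect (fun b => f (a, b))) := by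
  simp only [expect, compProd, Fintype.sum_prod_type, mul_sum, mul_assoc]

def prod (P : FinPMF α) (Q : FinPMF β) : FinPMF (α × β) := P.compProd fun _ => Q

lemma expect_prod_mul (P : FinPMF α) (Q : FinPMF β) (f : α → ℝ) (g : β → ℝ) :
    (P.prod Q).expect (fun x => f x.1 * g x.2) = P.expect f * Q.expect g := by
  simp only [prod, expect_compProd, expect_const_mul]
  rw [mul_comm, ← expect_const_mul]
  simp only [mul_comm]

lemma expect_prod_fst (P : FinPMF α) (Q : FinPMF β) (f : α → ℝ) :
    (P.prod Q).expect (fun x => f x.1) = P.expect f := by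
  simpa [expect_const] using expect_prod_mul P Q f fun _ => 1

variable [Fintype ι] [DecidableEq ι]

def pi (P : FinPMF α) : FinPMF (ι → α) where
  p x := ∏ i, P.p (x i)
  nonneg x := prod_nonneg fun i _ => P.nonneg _
  sum_eq_one := by rw [← Fintype.prod_sum (fun _ => P.p)]; simp [P.sum_eq_one]

lemma expect_pi_prod (P : FinPMF α) (f : ι → α → ℝ) :
    (pi P).expect (fun x => ∏ i, f i (x i)) = ∏ i, P.expect (f i) := by
  simp only [expect, pi]
  rw [Fintype.prod_sum (fun i a => P.p a * f i a)]
  simp only [prod_mul_distrib]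

lemma expect_pi_eval (P : FinPMF α) (i : ι) (f : α → ℝ) :
    (pi P).expect (fun x => f (x i)) = P.expect f := by
  have := expect_pi_prod P fun k a => if k = i then f a else 1
  have hk : ∀ k, P.expect (fun a => if k = i then f a else 1) = if k = i then P.expect f else 1 :=
    fun k => by split_ifs <;> simp [expect_const]
  simpa [hk, prod_ite_eq'] using this

lemma expect_pi_eval_mul_eval (P : FinPMF α) {i j : ι} (hij : i ≠ j) (f g : α → ℝ) :
    (pi P).expect (fun x => f (x i) * g (x j)) = P.expect f * P.expect g := by
  have := expect_pi_prod P fun k a => (if k = i then f a else 1) * (if k = j then g a else 1)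
  have hk : ∀ k, P.expect (fun a => (if k = i then f a else 1) * (if k = j then g a else 1)) =
      (if k = i then P.expect f else 1) * (if k = j then P.expect g else 1) := by
    intro k
    by_cases hi : k = i <;> by_cases hj : k = j <;> simp_all [expect_const]
  simp only [hk, prod_mul_distrib, prod_ite_eq', mem_univ, if_true] at this
  exact this

lemma expect_pi_uniform_ind_eval_eq [Nonempty α] {i j : ι} (hij : i ≠ j) :
    (pi (uniform : FinPMF α)).expect (fun x => ind (x j = x i)) = (Fintype.card α : ℝ)⁻¹ := by
  have hsplit : ∀ x : ι → α, ind (x j = x i) = ∑ a, ind (x i = a) * ind (x j = a) :=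
    fun x => (sum_ind_eq_mul (x i) fun a => ind (x j = a)).symm
  simp_rw [hsplit]
  rw [expect_sum, sum_congr rfl fun a _ =>
    expect_pi_eval_mul_eval uniform hij (fun b => ind (b = a)) (fun b => ind (b = a))]
  simp only [expect_ind_eq, uniform_apply, sum_const, card_univ, nsmul_eq_mul]
  have : (Fintype.card α : ℝ) ≠ 0 := by positivity
  field_simp

end FinPMF

/-- The tangent plane of the convex function `(x, y) ↦ (x y)⁻¹` at `(a, b)` lies below it. -/
lemma tangent_le_inv_mul {x y a b : ℝ} (hx : 0 < x) (hy : 0 < y) (ha : 0 < a) (hb : 0 < b) :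
    (3 - x / a - y / b) / (a * b) ≤ (x * y)⁻¹ := by
  set u := x / a
  set v := y / b
  have hu : 0 < u := div_pos hx ha
  have hv : 0 < v := div_pos hy hb
  -- AM–GM for `u`, `v` and `3 - u - v`
  have amgm : (3 - u - v) * (u * v) ≤ 1 := by
    nlinarith [sq_nonneg (u - v), sq_nonneg (u + v - 2), mul_pos hu hv,
      sq_nonneg (u * v - 1), sq_nonneg (u * v - u), sq_nonneg (u * v - v)]
  have hxy : x * y = u * v * (a * b) := by simp only [u, v]; field_simp
  rw [hxy, div_le_iff₀ (by positivity), mul_inv, inv_mul_cancel_right₀ (by positivity)]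
  rwa [← one_div, le_div_iff₀ (by positivity)]

/-- Jensen's inequality for `(x, y) ↦ (x y)⁻¹`, with the means of `X` and `Y` only bounded. -/
lemma sum_div_mul_ge_of_mean_le {ι : Type*} (s : Finset ι) {ν X Y : ι → ℝ} {a b : ℝ}
    (ha : 0 < a) (hb : 0 < b) (hν : ∀ i ∈ s, 0 ≤ ν i)
    (hX : ∀ i ∈ s, 0 < ν i → 0 < X i) (hY : ∀ i ∈ s, 0 < ν i → 0 < Y i)
    (hXa : ∑ i ∈ s, ν i * X i ≤ (∑ i ∈ s, ν i) * a)
    (hYb : ∑ i ∈ s, ν i * Y i ≤ (∑ i ∈ s, ν i) * b) :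
    (∑ i ∈ s, ν i) / (a * b) ≤ ∑ i ∈ s, ν i / (X i * Y i) := by
  have tangent : ∀ i ∈ s, ν i * ((3 - X i / a - Y i / b) / (a * b)) ≤ ν i / (X i * Y i) := by
    intro i hi
    rcases (hν i hi).eq_or_lt with h0 | hpos
    · simp [← h0]
    · rw [div_eq_mul_inv]
      exact mul_le_mul_of_nonneg_left
        (tangent_le_inv_mul (hX i hi hpos) (hY i hi hpos) ha hb) hpos.le
  refine le_trans ?_ (sum_le_sum tangent)
  have hsum : ∑ i ∈ s, ν i * ((3 - X i / a - Y i / b) / (a * b)) =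
      (3 * ∑ i ∈ s, ν i - (∑ i ∈ s, ν i * X i) / a - (∑ i ∈ s, ν i * Y i) / b) / (a * b) := by
    simp only [mul_sum, sum_div, ← sum_sub_distrib]
    refine sum_congr rfl fun i _ => ?_
    ring
  rw [hsum]
  gcongr
  have h1 : (∑ i ∈ s, ν i * X i) / a ≤ ∑ i ∈ s, ν i := by rwa [div_le_iff₀ ha]
  have h2 : (∑ i ∈ s, ν i * Y i) / b ≤ ∑ i ∈ s, ν i := by rwa [div_le_iff₀ hb]
  linarith

lemma sum_le_add_card_mul {ι : Type*} [Fintype ι] {t : ι → ℝ} {a b : ℝ} (i : ι) (hi : t i ≤ a)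
    (hb : 0 ≤ b) (ht : ∀ j ≠ i, t j ≤ b) : ∑ j, t j ≤ a + Fintype.card ι * b := by
  classical
  rw [← add_sum_erase _ _ (mem_univ i)]
  have hrest : ∑ j ∈ univ.erase i, t j ≤ (univ.erase i).card * b := by
    refine (sum_le_sum fun j hj => ht j (ne_of_mem_erase hj)).trans_eq ?_
    rw [sum_const, nsmul_eq_mul]
  have hcard : ((univ.erase i).card : ℝ) ≤ Fintype.card ι := by
    exact_mod_cast (card_erase_le).trans_eq card_univ
  nlinarith

section Marginals

variable (qSY : FinPMF (S × Y)) (qWU : S → FinPMF (W × U))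

lemma mS_nonneg (s : S) : 0 ≤ mS qSY s :=
  sum_nonneg fun _ _ => qSY.nonneg _

lemma mSWU_nonneg (s : S) (w : W) (u : U) : 0 ≤ mSWU qSY qWU s w u :=
  mul_nonneg (mS_nonneg qSY s) ((qWU s).nonneg _)

lemma mWU_nonneg (w : W) (u : U) : 0 ≤ mWU qSY qWU w u :=
  sum_nonneg fun s _ => mSWU_nonneg qSY qWU s w u

lemma mSW_nonneg (s : S) (w : W) : 0 ≤ mSW qSY qWU s w :=
  mul_nonneg (mS_nonneg qSY s) (sum_nonneg fun _ _ => (qWU s).nonneg _)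

lemma mW_nonneg (w : W) : 0 ≤ mW qSY qWU w :=
  sum_nonneg fun s _ => mSW_nonneg qSY qWU s w

lemma mYUW_nonneg (y : Y) (u : U) (w : W) : 0 ≤ mYUW qSY qWU y u w :=
  sum_nonneg fun _ _ => mul_nonneg (qSY.nonneg _) ((qWU _).nonneg _)

lemma mYW_nonneg (y : Y) (w : W) : 0 ≤ mYW qSY qWU y w :=
  sum_nonneg fun s _ => sum_nonneg fun _ _ => mul_nonneg (qSY.nonneg _) ((qWU s).nonneg _)

lemma sum_mSWU (s : S) (w : W) : ∑ u, mSWU qSY qWU s w u = mSW qSY qWU s w := by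
  simp only [mSWU, mSW, mul_sum]

lemma sum_mSW (s : S) : ∑ w, mSW qSY qWU s w = mS qSY s := by
  simp only [mSW, ← mul_sum, ← Fintype.sum_prod_type', (qWU s).sum_eq_one, mul_one]

lemma sum_mWU (w : W) : ∑ u, mWU qSY qWU w u = mW qSY qWU w := by
  simp only [mWU, mW]
  rw [sum_comm]
  exact sum_congr rfl fun s _ => sum_mSWU qSY qWU s w

lemma sum_mW : ∑ w, mW qSY qWU w = 1 := by
  simp only [mW]
  rw [sum_comm, sum_congr rfl fun s _ => sum_mSW qSY qWU s, ← qSY.sum_eq_one,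
    Fintype.sum_prod_type]
  rfl

lemma sum_mYUW (y : Y) (w : W) : ∑ u, mYUW qSY qWU y u w = mYW qSY qWU y w := by
  simp only [mYUW, mYW]
  exact sum_comm

lemma mSWU_le_mWU (s : S) (w : W) (u : U) : mSWU qSY qWU s w u ≤ mWU qSY qWU w u :=
  single_le_sum (fun s' _ => mSWU_nonneg qSY qWU s' w u) (mem_univ s)

lemma mYUW_le_mWU (y : Y) (u : U) (w : W) : mYUW qSY qWU y u w ≤ mWU qSY qWU w u :=
  sum_le_sum fun s _ => mul_le_mul_of_nonneg_right
    (single_le_sum (fun y' _ => qSY.nonneg (s, y')) (mem_univ y)) ((qWU s).nonneg _)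

end Marginals

section Conditionals

variable (qSY : FinPMF (S × Y)) (qWU : S → FinPMF (W × U))

/-- `q(s | w, u)`, which is `0` where `q(w, u) = 0`. -/
noncomputable def condS (s : S) (x : W × U) : ℝ := mSWU qSY qWU s x.1 x.2 / mWU qSY qWU x.1 x.2

/-- `q(y | w, u)`, which is `0` where `q(w, u) = 0`. -/
noncomputable def condY (y : Y) (x : W × U) : ℝ := mYUW qSY qWU y x.2 x.1 / mWU qSY qWU x.1 x.2

lemma condS_nonneg (s : S) (x : W × U) : 0 ≤ condS qSY qWU s x :=
  div_nonneg (mSWU_nonneg qSY qWU _ _ _) (mWU_nonneg qSY qWU _ _)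

lemma condY_nonneg (y : Y) (x : W × U) : 0 ≤ condY qSY qWU y x :=
  div_nonneg (mYUW_nonneg qSY qWU _ _ _) (mWU_nonneg qSY qWU _ _)

lemma mSWU_eq_zero_of_mWU (s : S) {w : W} {u : U} (h : mWU qSY qWU w u = 0) :
    mSWU qSY qWU s w u = 0 :=
  le_antisymm (h ▸ mSWU_le_mWU qSY qWU s w u) (mSWU_nonneg qSY qWU s w u)

lemma mYUW_eq_zero_of_mWU (y : Y) {w : W} {u : U} (h : mWU qSY qWU w u = 0) :
    mYUW qSY qWU y u w = 0 :=
  le_antisymm (h ▸ mYUW_le_mWU qSY qWU y u w) (mYUW_nonneg qSY qWU y u w)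

lemma sum_mWU_mul_condS (s : S) :
    ∑ x : W × U, mWU qSY qWU x.1 x.2 * condS qSY qWU s x = mS qSY s := by
  simp only [condS, mul_div_cancel_of_imp' (mSWU_eq_zero_of_mWU qSY qWU s),
    Fintype.sum_prod_type, sum_mSWU, sum_mSW]

noncomputable def pmfW : FinPMF W := ⟨mW qSY qWU, mW_nonneg qSY qWU, sum_mW qSY qWU⟩

variable [Nonempty U]

/-- `q(u | w)`, which is uniform where `q(w) = 0`. -/
noncomputable def condU (w : W) : FinPMF U := FinPMF.normalize (mWU qSY qWU w)

lemma mW_mul_condU (w : W) (u : U) : mW qSY qWU w * (condU qSY qWU w).p u = mWU qSY qWU w u := by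
  rw [← sum_mWU, condU, FinPMF.sum_mul_normalize_apply (mWU_nonneg qSY qWU w)]

lemma expect_condU_condS (s : S) (w : W) :
    (condU qSY qWU w).expect (fun u => condS qSY qWU s (w, u)) =
      mSW qSY qWU s w / mW qSY qWU w := by
  rw [← sum_mSWU, ← sum_mWU, condU]
  exact FinPMF.expect_normalize_div (mWU_nonneg qSY qWU w) fun u => mSWU_eq_zero_of_mWU qSY qWU s

lemma expect_condU_condY (y : Y) (w : W) :
    (condU qSY qWU w).expect (fun u => condY qSY qWU y (w, u)) =
      mYW qSY qWU y w / mW qSY qWU w := by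
  rw [← sum_mYUW, ← sum_mWU, condU]
  exact FinPMF.expect_normalize_div (mWU_nonneg qSY qWU w) fun u => mYUW_eq_zero_of_mWU qSY qWU y

end Conditionals

def slot {α β ι : Type} (c : α × (ι → β)) (j : ι) : α × β := (c.1, c.2 j)

section Cluster

variable (qSY : FinPMF (S × Y)) (qWU : S → FinPMF (W × U)) [Nonempty U] (J2 : ℕ)

noncomputable def cluster : FinPMF (W × (Fin J2 → U)) :=
  (pmfW qSY qWU).compProd fun w => FinPMF.pi (condU qSY qWU w)

lemma expect_cluster_slot (j : Fin J2) (f : W × U → ℝ) :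
    (cluster qSY qWU J2).expect (fun c => f (slot c j)) =
      ∑ x : W × U, mWU qSY qWU x.1 x.2 * f x := by
  have hrow : ∀ w, (FinPMF.pi (condU qSY qWU w)).expect (fun uf => f (slot (w, uf) j)) =
      (condU qSY qWU w).expect (fun u => f (w, u)) :=
    fun w => FinPMF.expect_pi_eval _ j fun u => f (w, u)
  rw [cluster, FinPMF.expect_compProd]
  simp only [hrow]
  simp only [FinPMF.expect, pmfW, mul_sum, ← mul_assoc, mW_mul_condU, Fintype.sum_prod_type]

lemma expect_cluster_ind_slot_mul_slot_self (j : Fin J2) (x : W × U) (g : W × U → ℝ) :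
    (cluster qSY qWU J2).expect (fun c => ind (slot c j = x) * g (slot c j)) =
      mWU qSY qWU x.1 x.2 * g x := by
  rw [expect_cluster_slot qSY qWU J2 j fun x' => ind (x' = x) * g x']
  simp only [mul_left_comm (mWU _ _ _ _), sum_ind_eq_mul']

lemma expect_cluster_ind_slot (j : Fin J2) (x : W × U) :
    (cluster qSY qWU J2).expect (fun c => ind (slot c j = x)) = mWU qSY qWU x.1 x.2 := by
  simpa using expect_cluster_ind_slot_mul_slot_self qSY qWU J2 j x fun _ => 1

lemma expect_cluster_ind_slot_mul_slot {j j' : Fin J2} (hj : j ≠ j') (x : W × U)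
    (g : W × U → ℝ) :
    (cluster qSY qWU J2).expect (fun c => ind (slot c j = x) * g (slot c j')) =
      mWU qSY qWU x.1 x.2 * (condU qSY qWU x.1).expect (fun u => g (x.1, u)) := by
  obtain ⟨w, u⟩ := x
  have hrow : ∀ w', (FinPMF.pi (condU qSY qWU w')).expect
      (fun uf => ind (slot (w', uf) j = (w, u)) * g (slot (w', uf) j')) =
      ind (w' = w) *
        ((condU qSY qWU w').p u * (condU qSY qWU w').expect (fun u' => g (w', u'))) := by
    intro w'
    simp only [slot, ind_prod_mk_eq, mul_assoc, FinPMF.expect_const_mul,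
      FinPMF.expect_pi_eval_mul_eval _ hj (fun u' => ind (u' = u)) (fun u' => g (w', u')),
      FinPMF.expect_ind_eq]
  rw [cluster, FinPMF.expect_compProd]
  simp only [hrow]
  calc ∑ w', mW qSY qWU w' * (ind (w' = w) * ((condU qSY qWU w').p u *
          (condU qSY qWU w').expect (fun u' => g (w', u'))))
      = ∑ w', ind (w' = w) * (mW qSY qWU w' * (condU qSY qWU w').p u *
          (condU qSY qWU w').expect (fun u' => g (w', u'))) :=
        sum_congr rfl fun _ _ => by ring
    _ = _ := by rw [sum_ind_eq_mul', mW_mul_condU]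

end Cluster

/-- `M1` clusters of `J2` codewords each; position `j` of every cluster lies in bin `θ.2 j`. -/
abbrev Codebook (W U : Type) (M1 M2 J2 : ℕ) := (Fin M1 → W × (Fin J2 → U)) × (Fin J2 → Fin M2)

section Denominators

variable (qSY : FinPMF (S × Y)) (qWU : S → FinPMF (W × U)) (M1 M2 J2 : ℕ)

noncomputable def encNormalizer (cb : Fin M1 → W × (Fin J2 → U)) (s : S) : ℝ :=
  ∑ i, ∑ j, condS qSY qWU s (slot (cb i) j)

noncomputable def decNormalizer (θ : Codebook W U M1 M2 J2) (i : Fin M1) (k : Fin M2) (y : Y) : ℝ :=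
  ∑ j, ind (θ.2 j = k) * condY qSY qWU y (slot (θ.1 i) j)

/-- Bounds the mean of `encNormalizer` given that some codeword is `x`; the three terms come from
that codeword, the rest of its cluster, and the other clusters. -/
noncomputable def encNormalizerBound (s : S) (x : W × U) : ℝ :=
  condS qSY qWU s x + J2 * (mSW qSY qWU s x.1 / mW qSY qWU x.1) + M1 * (J2 * mS qSY s)

/-- Bounds the mean of `decNormalizer` given that some codeword is `x`; the two terms come from that
codeword and the rest of its cluster, each of which shares its bin with probability `1 / M2`. -/
noncomputable def decNormalizerBound (y : Y) (x : W × U) : ℝ :=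
  condY qSY qWU y x + J2 * ((M2 : ℝ)⁻¹ * (mYW qSY qWU y x.1 / mW qSY qWU x.1))

end Denominators

section RandomCodebook

variable (qSY : FinPMF (S × Y)) (qWU : S → FinPMF (W × U)) [Nonempty U] (M1 M2 J2 : ℕ) [NeZero M2]

noncomputable def codebook : FinPMF (Codebook W U M1 M2 J2) :=
  (FinPMF.pi (cluster qSY qWU J2)).prod (FinPMF.pi FinPMF.uniform)

lemma expect_codebook_ind_slot (i : Fin M1) (j : Fin J2) (x : W × U) :
    (codebook qSY qWU M1 M2 J2).expect (fun θ => ind (slot (θ.1 i) j = x)) =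
      mWU qSY qWU x.1 x.2 := by
  rw [codebook]
  refine (FinPMF.expect_prod_fst _ _ fun cb : Fin M1 → W × (Fin J2 → U) =>
    ind (slot (cb i) j = x)).trans ?_
  exact (FinPMF.expect_pi_eval _ i fun c => ind (slot c j = x)).trans
    (expect_cluster_ind_slot qSY qWU J2 j x)

lemma expect_codebook_ind_slot_mul_encNormalizer_le (s : S) (i : Fin M1) (j : Fin J2) (x : W × U) :
    (codebook qSY qWU M1 M2 J2).expect
        (fun θ => ind (slot (θ.1 i) j = x) * encNormalizer qSY qWU M1 J2 θ.1 s) ≤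
      mWU qSY qWU x.1 x.2 * encNormalizerBound qSY qWU M1 J2 s x := by
  set row := fun c : W × (Fin J2 → U) => ∑ j', condS qSY qWU s (slot c j')
  have hmass := mWU_nonneg qSY qWU x.1 x.2
  have hsplit : ∀ cb : Fin M1 → W × (Fin J2 → U), ind (slot (cb i) j = x) *
      encNormalizer qSY qWU M1 J2 cb s = ∑ i', ind (slot (cb i) j = x) * row (cb i') :=
    fun cb => mul_sum _ _ _
  have hsame : (FinPMF.pi (cluster qSY qWU J2)).expect
      (fun cb => ind (slot (cb i) j = x) * row (cb i)) ≤
      mWU qSY qWU x.1 x.2 * condS qSY qWU s x +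
        J2 * (mWU qSY qWU x.1 x.2 * (mSW qSY qWU s x.1 / mW qSY qWU x.1)) := by
    refine (FinPMF.expect_pi_eval _ i fun c => ind (slot c j = x) * row c).trans_le ?_
    simp only [row, mul_sum]
    rw [FinPMF.expect_sum]
    refine (sum_le_add_card_mul j ?_ ?_ fun j' hj' => ?_).trans_eq (by rw [Fintype.card_fin])
    · rw [expect_cluster_ind_slot_mul_slot_self]
    · exact mul_nonneg hmass (div_nonneg (mSW_nonneg qSY qWU s x.1) (mW_nonneg qSY qWU x.1))
    · rw [expect_cluster_ind_slot_mul_slot _ _ _ (Ne.symm hj'), expect_condU_condS]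
  have hother : ∀ i' ≠ i, (FinPMF.pi (cluster qSY qWU J2)).expect
      (fun cb => ind (slot (cb i) j = x) * row (cb i')) =
      mWU qSY qWU x.1 x.2 * (J2 * mS qSY s) := by
    intro i' hi'
    refine (FinPMF.expect_pi_eval_mul_eval _ (Ne.symm hi') (fun c => ind (slot c j = x))
      row).trans ?_
    rw [expect_cluster_ind_slot]
    simp only [row]
    rw [FinPMF.expect_sum]
    simp only [expect_cluster_slot, sum_mWU_mul_condS, sum_const, card_univ, Fintype.card_fin,
      nsmul_eq_mul]
  rw [codebook]
  refine (FinPMF.expect_prod_fst _ _ fun cb : Fin M1 → W × (Fin J2 → U) =>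
    ind (slot (cb i) j = x) * encNormalizer qSY qWU M1 J2 cb s).trans_le ?_
  simp only [hsplit]
  rw [FinPMF.expect_sum]
  refine (sum_le_add_card_mul i hsame ?_ fun i' hi' => (hother i' hi').le).trans_eq ?_
  · exact mul_nonneg hmass (mul_nonneg (Nat.cast_nonneg _) (mS_nonneg qSY s))
  · simp only [encNormalizerBound, Fintype.card_fin]
    ring

lemma expect_codebook_ind_slot_mul_decNormalizer_le (y : Y) (i : Fin M1) (j : Fin J2) (x : W × U) :
    (codebook qSY qWU M1 M2 J2).expect
        (fun θ => ind (slot (θ.1 i) j = x) * decNormalizer qSY qWU M1 M2 J2 θ i (θ.2 j) y) ≤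
      mWU qSY qWU x.1 x.2 * decNormalizerBound qSY qWU M2 J2 y x := by
  have hmass := mWU_nonneg qSY qWU x.1 x.2
  have hsplit : ∀ θ : Codebook W U M1 M2 J2,
      ind (slot (θ.1 i) j = x) * decNormalizer qSY qWU M1 M2 J2 θ i (θ.2 j) y =
      ∑ j', ind (slot (θ.1 i) j = x) * condY qSY qWU y (slot (θ.1 i) j') *
        ind (θ.2 j' = θ.2 j) := by
    intro θ
    simp only [decNormalizer, mul_sum]
    exact sum_congr rfl fun _ _ => by ring
  -- clusters and bins are independent
  have hterm : ∀ j', (codebook qSY qWU M1 M2 J2).expect (fun θ =>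
      ind (slot (θ.1 i) j = x) * condY qSY qWU y (slot (θ.1 i) j') * ind (θ.2 j' = θ.2 j)) =
      (cluster qSY qWU J2).expect (fun c => ind (slot c j = x) * condY qSY qWU y (slot c j')) *
        (FinPMF.pi (FinPMF.uniform : FinPMF (Fin M2))).expect (fun b => ind (b j' = b j)) := by
    intro j'
    rw [codebook]
    refine (FinPMF.expect_prod_mul _ _
      (fun cb : Fin M1 → W × (Fin J2 → U) =>
        ind (slot (cb i) j = x) * condY qSY qWU y (slot (cb i) j'))
      (fun b : Fin J2 → Fin M2 => ind (b j' = b j))).trans ?_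
    rw [FinPMF.expect_pi_eval _ i fun c => ind (slot c j = x) * condY qSY qWU y (slot c j')]
  simp only [hsplit]
  rw [FinPMF.expect_sum]
  simp only [hterm]
  refine (sum_le_add_card_mul (a := mWU qSY qWU x.1 x.2 * condY qSY qWU y x)
    (b := (M2 : ℝ)⁻¹ * (mWU qSY qWU x.1 x.2 * (mYW qSY qWU y x.1 / mW qSY qWU x.1)))
    j ?_ ?_ fun j' hj' => ?_).trans_eq ?_
  · simp [expect_cluster_ind_slot_mul_slot_self, ind_of_true, FinPMF.expect_const]
  · exact mul_nonneg (by positivity)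
      (mul_nonneg hmass (div_nonneg (mYW_nonneg qSY qWU y x.1) (mW_nonneg qSY qWU x.1)))
  · rw [expect_cluster_ind_slot_mul_slot _ _ _ (Ne.symm hj'), expect_condU_condY,
      FinPMF.expect_pi_uniform_ind_eval_eq (Ne.symm hj'), Fintype.card_fin, mul_comm]
  · simp only [decNormalizerBound, Fintype.card_fin]
    ring

end RandomCodebook

section Selection

variable (qSY : FinPMF (S × Y)) (qWU : S → FinPMF (W × U)) (M1 M2 J2 : ℕ)

lemma condS_le_encNormalizer (cb : Fin M1 → W × (Fin J2 → U)) (s : S) (i : Fin M1) (j : Fin J2) :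
    condS qSY qWU s (slot (cb i) j) ≤ encNormalizer qSY qWU M1 J2 cb s :=
  (single_le_sum (fun _ _ => condS_nonneg qSY qWU s _) (mem_univ j)).trans
    (single_le_sum (f := fun i' => ∑ j', condS qSY qWU s (slot (cb i') j'))
      (fun _ _ => sum_nonneg fun _ _ => condS_nonneg qSY qWU s _) (mem_univ i))

lemma condY_le_decNormalizer (θ : Codebook W U M1 M2 J2) (y : Y) (i : Fin M1) (j : Fin J2) :
    condY qSY qWU y (slot (θ.1 i) j) ≤ decNormalizer qSY qWU M1 M2 J2 θ i (θ.2 j) y := by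
  refine le_of_eq_of_le ?_ (single_le_sum (fun j' _ => mul_nonneg (ind_nonneg _)
    (condY_nonneg qSY qWU y _)) (mem_univ j))
  rw [ind_of_true rfl, one_mul]

lemma condS_le_encNormalizerBound (s : S) (x : W × U) :
    condS qSY qWU s x ≤ encNormalizerBound qSY qWU M1 J2 s x := by
  have := mul_nonneg (Nat.cast_nonneg J2 : (0 : ℝ) ≤ J2)
    (div_nonneg (mSW_nonneg qSY qWU s x.1) (mW_nonneg qSY qWU x.1))
  have := mul_nonneg (Nat.cast_nonneg M1 : (0 : ℝ) ≤ M1)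
    (mul_nonneg (Nat.cast_nonneg J2 : (0 : ℝ) ≤ J2) (mS_nonneg qSY s))
  unfold encNormalizerBound
  linarith

lemma condY_le_decNormalizerBound (y : Y) (x : W × U) :
    condY qSY qWU y x ≤ decNormalizerBound qSY qWU M2 J2 y x := by
  have := mul_nonneg (Nat.cast_nonneg J2 : (0 : ℝ) ≤ J2) (mul_nonneg (inv_nonneg.2
    (Nat.cast_nonneg M2 : (0 : ℝ) ≤ M2)) (div_nonneg (mYW_nonneg qSY qWU y x.1)
    (mW_nonneg qSY qWU x.1)))
  unfold decNormalizerBound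
  linarith

/-- The chance that, for the source `s` and side information `y`, the likelihood encoder picks
codeword `(i, j)` and decoder 2 picks `j` back out of its bin. -/
noncomputable def selectProb (θ : Codebook W U M1 M2 J2) (s : S) (y : Y) (i : Fin M1)
    (j : Fin J2) : ℝ :=
  condS qSY qWU s (slot (θ.1 i) j) / encNormalizer qSY qWU M1 J2 θ.1 s *
    (condY qSY qWU y (slot (θ.1 i) j) / decNormalizer qSY qWU M1 M2 J2 θ i (θ.2 j) y)

noncomputable def selectBound (s : S) (y : Y) (x : W × U) : ℝ :=
  condS qSY qWU s x * condY qSY qWU y x *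
    (mWU qSY qWU x.1 x.2 /
      (encNormalizerBound qSY qWU M1 J2 s x * decNormalizerBound qSY qWU M2 J2 y x))

variable [Nonempty U] [NeZero M2]

lemma selectBound_le_expect (s : S) (y : Y) (i : Fin M1) (j : Fin J2) (x : W × U) :
    selectBound qSY qWU M1 M2 J2 s y x ≤ (codebook qSY qWU M1 M2 J2).expect
      (fun θ => ind (slot (θ.1 i) j = x) * selectProb qSY qWU M1 M2 J2 θ s y i j) := by
  set C := codebook qSY qWU M1 M2 J2
  set X := fun θ : Codebook W U M1 M2 J2 => encNormalizer qSY qWU M1 J2 θ.1 s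
  set Z := fun θ : Codebook W U M1 M2 J2 => decNormalizer qSY qWU M1 M2 J2 θ i (θ.2 j) y
  have hslice : ∀ θ, ind (slot (θ.1 i) j = x) * selectProb qSY qWU M1 M2 J2 θ s y i j =
      condS qSY qWU s x * condY qSY qWU y x * (ind (slot (θ.1 i) j = x) / (X θ * Z θ)) := by
    intro θ
    by_cases h : slot (θ.1 i) j = x
    · rw [selectProb, h, ind_of_true rfl]
      ring
    · simp [ind_of_false h]
  simp only [hslice, FinPMF.expect_const_mul, selectBound]
  rcases (mul_nonneg (condS_nonneg qSY qWU s x) (condY_nonneg qSY qWU y x)).eq_or_lt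
    with h0 | hpos
  · simp [← h0]
  gcongr
  have hS : 0 < condS qSY qWU s x := pos_of_mul_pos_left hpos (condY_nonneg qSY qWU y x)
  have hY : 0 < condY qSY qWU y x := pos_of_mul_pos_right hpos (condS_nonneg qSY qWU s x)
  have hmass : ∑ θ, C.p θ * ind (slot (θ.1 i) j = x) = mWU qSY qWU x.1 x.2 :=
    expect_codebook_ind_slot qSY qWU M1 M2 J2 i j x
  have hX : ∀ θ ∈ univ, 0 < C.p θ * ind (slot (θ.1 i) j = x) → 0 < X θ := fun θ _ hθ =>
    hS.trans_le (of_mul_ind_pos hθ ▸ condS_le_encNormalizer qSY qWU M1 J2 θ.1 s i j)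
  have hZ : ∀ θ ∈ univ, 0 < C.p θ * ind (slot (θ.1 i) j = x) → 0 < Z θ := fun θ _ hθ =>
    hY.trans_le (of_mul_ind_pos hθ ▸ condY_le_decNormalizer qSY qWU M1 M2 J2 θ y i j)
  -- Jensen's inequality for the weights `C.p θ` on the event that codeword `(i, j)` is `x`
  have key := sum_div_mul_ge_of_mean_le univ
    (hS.trans_le (condS_le_encNormalizerBound qSY qWU M1 J2 s x))
    (hY.trans_le (condY_le_decNormalizerBound qSY qWU M2 J2 y x))
    (fun θ _ => mul_nonneg (C.nonneg θ) (ind_nonneg _)) hX hZ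
    (by simpa only [hmass, mul_assoc, FinPMF.expect] using
      expect_codebook_ind_slot_mul_encNormalizer_le qSY qWU M1 M2 J2 s i j x)
    (by simpa only [hmass, mul_assoc, FinPMF.expect] using
      expect_codebook_ind_slot_mul_decNormalizer_le qSY qWU M1 M2 J2 y i j x)
  simpa only [hmass, mul_div_assoc, FinPMF.expect] using key

end Selection

section Averaging

variable (qSY : FinPMF (S × Y)) (qWU : S → FinPMF (W × U)) [Nonempty U] (M1 M2 J2 : ℕ)
  [NeZero M2]

lemma sum_selectBound_le_expect {φ : W × U → ℝ} (hφ : ∀ x, 0 ≤ φ x) (s : S) (y : Y) :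
    M1 * J2 * ∑ x, φ x * selectBound qSY qWU M1 M2 J2 s y x ≤
      ∑ i, ∑ j, (codebook qSY qWU M1 M2 J2).expect
        (fun θ => selectProb qSY qWU M1 M2 J2 θ s y i j * φ (slot (θ.1 i) j)) := by
  have hslot : ∀ i j, ∑ x, φ x * selectBound qSY qWU M1 M2 J2 s y x ≤
      (codebook qSY qWU M1 M2 J2).expect
        (fun θ => selectProb qSY qWU M1 M2 J2 θ s y i j * φ (slot (θ.1 i) j)) := by
    intro i j
    have hpart : ∀ θ : Codebook W U M1 M2 J2,
        selectProb qSY qWU M1 M2 J2 θ s y i j * φ (slot (θ.1 i) j) =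
        ∑ x, φ x * (ind (slot (θ.1 i) j = x) * selectProb qSY qWU M1 M2 J2 θ s y i j) := by
      intro θ
      rw [← sum_ind_eq_mul (slot (θ.1 i) j) fun x => selectProb qSY qWU M1 M2 J2 θ s y i j * φ x]
      exact sum_congr rfl fun _ _ => by ring
    simp only [hpart]
    rw [FinPMF.expect_sum]
    simp only [FinPMF.expect_const_mul]
    exact sum_le_sum fun x _ =>
      mul_le_mul_of_nonneg_left (selectBound_le_expect qSY qWU M1 M2 J2 s y i j x) (hφ x)
  calc (M1 : ℝ) * J2 * ∑ x, φ x * selectBound qSY qWU M1 M2 J2 s y x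
      = ∑ _i : Fin M1, ∑ _j : Fin J2, ∑ x, φ x * selectBound qSY qWU M1 M2 J2 s y x := by
        simp only [sum_const, card_univ, Fintype.card_fin, nsmul_eq_mul]
        ring
    _ ≤ _ := sum_le_sum fun i _ => sum_le_sum fun j _ => hslot i j

end Averaging

noncomputable def noExcess (d1 : S → R1 → ℝ) (d2 : S → R2 → ℝ) (D1 D2 : ℝ) (g1 : W → R1)
    (g2 : W → U → Y → R2) (s : S) (y : Y) (x : W × U) : ℝ :=
  ind (d1 s (g1 x.1) ≤ D1 ∧ d2 s (g2 x.1 x.2 y) ≤ D2)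

lemma pNoExcessHB_eq_sum_expect (M : ℕ) (qSY : FinPMF (S × Y)) (d1 : S → R1 → ℝ)
    (d2 : S → R2 → ℝ) (D1 D2 : ℝ) (enc : S → FinPMF (Fin M)) (dec1 : Fin M → FinPMF R1)
    (dec2 : Fin M → Y → FinPMF R2) :
    pNoExcessHB M qSY d1 d2 D1 D2 enc dec1 dec2 = ∑ s, ∑ y, qSY.p (s, y) *
      (enc s).expect fun m => (dec1 m).expect fun r1 => (dec2 m y).expect fun r2 =>
        ind (d1 s r1 ≤ D1 ∧ d2 s r2 ≤ D2) := by
  simp only [pNoExcessHB, FinPMF.expect, mul_sum, mul_assoc]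

section Code

variable (qSY : FinPMF (S × Y)) (qWU : S → FinPMF (W × U)) (M1 M2 J2 : ℕ)

noncomputable def encoder [NeZero M1] [NeZero J2] (θ : Codebook W U M1 M2 J2) (s : S) :
    FinPMF (Fin (M1 * M2)) :=
  (FinPMF.normalize fun ij : Fin M1 × Fin J2 => condS qSY qWU s (slot (θ.1 ij.1) ij.2)).map
    fun ij => finProdFinEquiv (ij.1, θ.2 ij.2)

noncomputable def decoder1 (g1 : W → R1) (θ : Codebook W U M1 M2 J2) (m : Fin (M1 * M2)) :
    FinPMF R1 :=
  FinPMF.pure (g1 (θ.1 (finProdFinEquiv.symm m).1).1)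

noncomputable def decoder2 [NeZero J2] (g2 : W → U → Y → R2) (θ : Codebook W U M1 M2 J2)
    (m : Fin (M1 * M2)) (y : Y) : FinPMF R2 :=
  (FinPMF.normalize fun j => ind (θ.2 j = (finProdFinEquiv.symm m).2) *
      condY qSY qWU y (slot (θ.1 (finProdFinEquiv.symm m).1) j)).map
    fun j => g2 (slot (θ.1 (finProdFinEquiv.symm m).1) j).1
      (slot (θ.1 (finProdFinEquiv.symm m).1) j).2 y

lemma sum_selectProb_le_pNoExcessHB [NeZero M1] [NeZero J2] (d1 : S → R1 → ℝ)
    (d2 : S → R2 → ℝ) (D1 D2 : ℝ) (g1 : W → R1) (g2 : W → U → Y → R2)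
    (θ : Codebook W U M1 M2 J2) :
    ∑ s, ∑ y, qSY.p (s, y) * ∑ i, ∑ j, selectProb qSY qWU M1 M2 J2 θ s y i j *
        noExcess d1 d2 D1 D2 g1 g2 s y (slot (θ.1 i) j) ≤
      pNoExcessHB (M1 * M2) qSY d1 d2 D1 D2 (encoder qSY qWU M1 M2 J2 θ)
        (decoder1 M1 M2 J2 g1 θ) (decoder2 qSY qWU M1 M2 J2 g2 θ) := by
  rw [pNoExcessHB_eq_sum_expect]
  refine sum_le_sum fun s _ => sum_le_sum fun y _ => mul_le_mul_of_nonneg_left ?_ (qSY.nonneg _)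
  have hdec : ∀ i j,
      condY qSY qWU y (slot (θ.1 i) j) / decNormalizer qSY qWU M1 M2 J2 θ i (θ.2 j) y *
        noExcess d1 d2 D1 D2 g1 g2 s y (slot (θ.1 i) j) ≤
      (decoder1 M1 M2 J2 g1 θ (finProdFinEquiv (i, θ.2 j))).expect
        fun r1 => (decoder2 qSY qWU M1 M2 J2 g2 θ (finProdFinEquiv (i, θ.2 j)) y).expect
          fun r2 => ind (d1 s r1 ≤ D1 ∧ d2 s r2 ≤ D2) := by
    intro i j
    have hD : ∀ j', 0 ≤ ind (θ.2 j' = θ.2 j) * condY qSY qWU y (slot (θ.1 i) j') :=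
      fun j' => mul_nonneg (ind_nonneg _) (condY_nonneg qSY qWU y _)
    simp only [decoder1, decoder2, FinPMF.expect_pure, FinPMF.expect_map,
      Equiv.symm_apply_apply]
    refine le_trans ?_ (FinPMF.single_mul_le_expect _ (fun j' => ind_nonneg _) j)
    refine mul_le_mul_of_nonneg_right ?_ (ind_nonneg _)
    simpa [ind_of_true, decNormalizer] using FinPMF.div_sum_le_normalize_apply hD j
  have hE : ∀ ij : Fin M1 × Fin J2, 0 ≤ condS qSY qWU s (slot (θ.1 ij.1) ij.2) :=
    fun ij => condS_nonneg qSY qWU s _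
  simp only [encoder, FinPMF.expect_map]
  refine le_trans ?_ (FinPMF.sum_div_sum_mul_le_expect_normalize hE fun ij =>
    FinPMF.expect_nonneg _ fun r1 => FinPMF.expect_nonneg _ fun r2 => ind_nonneg _)
  rw [Fintype.sum_prod_type]
  refine sum_le_sum fun i _ => sum_le_sum fun j _ => ?_
  have hden : ∑ ij : Fin M1 × Fin J2, condS qSY qWU s (slot (θ.1 ij.1) ij.2) =
      encNormalizer qSY qWU M1 J2 θ.1 s :=
    Fintype.sum_prod_type _
  rw [selectProb, mul_assoc, hden]
  exact mul_le_mul_of_nonneg_left (hdec i j)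
    (div_nonneg (condS_nonneg qSY qWU s _) (hden ▸ sum_nonneg fun ij _ => hE ij))

end Code

section InformationDensities

variable (qSY : FinPMF (S × Y)) (qWU : S → FinPMF (W × U)) {s : S} {y : Y} {w : W} {u : U}

lemma marginals_pos_of_qHB_pos (h : 0 < qHB qSY qWU s y w u) :
    0 < mS qSY s ∧ 0 < mSW qSY qWU s w ∧ 0 < mW qSY qWU w ∧ 0 < mSWU qSY qWU s w u ∧
      0 < mWU qSY qWU w u ∧ 0 < mYUW qSY qWU y u w ∧ 0 < mYW qSY qWU y w := by
  have hq := qSY.nonneg (s, y)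
  have hqWU := (qWU s).nonneg (w, u)
  have hS : 0 < mS qSY s := (pos_of_mul_pos_left h hqWU).trans_le
    (single_le_sum (fun y' _ => qSY.nonneg (s, y')) (mem_univ y))
  have hSWU : 0 < mSWU qSY qWU s w u := mul_pos hS (pos_of_mul_pos_right h hq)
  have hSW : 0 < mSW qSY qWU s w := hSWU.trans_le <| sum_mSWU qSY qWU s w ▸
    single_le_sum (fun u' _ => mSWU_nonneg qSY qWU s w u') (mem_univ u)
  have hYUW : 0 < mYUW qSY qWU y u w := h.trans_le <|
    single_le_sum (f := fun s' => qHB qSY qWU s' y w u)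
      (fun s' _ => mul_nonneg (qSY.nonneg _) ((qWU s').nonneg _)) (mem_univ s)
  refine ⟨hS, hSW, hSW.trans_le ?_, hSWU, hSWU.trans_le (mSWU_le_mWU qSY qWU s w u), hYUW,
    hYUW.trans_le ?_⟩
  · exact single_le_sum (f := fun s' => mSW qSY qWU s' w) (fun s' _ => mSW_nonneg qSY qWU s' w)
      (mem_univ s)
  · exact sum_mYUW qSY qWU y w ▸
      single_le_sum (fun u' _ => mYUW_nonneg qSY qWU y u' w) (mem_univ u)

variable (M1 M2 J2 : ℕ)

lemma encNormalizerBound_eq_of_qHB_pos [NeZero M1] [NeZero J2] (h : 0 < qHB qSY qWU s y w u) :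
    encNormalizerBound qSY qWU M1 J2 s (w, u) = M1 * J2 * mS qSY s *
      (1 + (M1 : ℝ)⁻¹ * (2 : ℝ) ^ (iSW qSY qWU s w) +
        ((M1 : ℝ) * (J2 : ℝ))⁻¹ * (2 : ℝ) ^ (iSWU qSY qWU s w u)) := by
  obtain ⟨hS, hSW, hW, hSWU, hWU, -, -⟩ := marginals_pos_of_qHB_pos qSY qWU h
  rw [encNormalizerBound, condS, iSW, iSWU, Real.rpow_logb two_pos (by norm_num) (by positivity),
    Real.rpow_logb two_pos (by norm_num) (by positivity)]
  have : (M1 : ℝ) ≠ 0 := NeZero.ne _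
  have : (J2 : ℝ) ≠ 0 := NeZero.ne _
  field_simp
  ring

lemma decNormalizerBound_eq_of_qHB_pos [NeZero M2] (h : 0 < qHB qSY qWU s y w u) :
    decNormalizerBound qSY qWU M2 J2 y (w, u) = condY qSY qWU y (w, u) *
      (1 + (J2 : ℝ) * (M2 : ℝ)⁻¹ * (2 : ℝ) ^ (-(iYUcW qSY qWU y u w))) := by
  obtain ⟨-, -, hW, -, hWU, hYUW, hYW⟩ := marginals_pos_of_qHB_pos qSY qWU h
  rw [decNormalizerBound, condY, iYUcW, Real.rpow_neg zero_le_two,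
    Real.rpow_logb two_pos (by norm_num) (by positivity)]
  have : (M2 : ℝ) ≠ 0 := NeZero.ne _
  field_simp

noncomputable def penalty (s : S) (y : Y) (w : W) (u : U) : ℝ :=
  (1 + (M1 : ℝ)⁻¹ * (2 : ℝ) ^ (iSW qSY qWU s w)
      + ((M1 : ℝ) * (J2 : ℝ))⁻¹ * (2 : ℝ) ^ (iSWU qSY qWU s w u)) *
    (1 + (J2 : ℝ) * (M2 : ℝ)⁻¹ * (2 : ℝ) ^ (-(iYUcW qSY qWU y u w)))

lemma qHB_mul_inv_le_mul_selectBound [NeZero M1] [NeZero M2] [NeZero J2] (s : S) (y : Y) (w : W)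
    (u : U) :
    qHB qSY qWU s y w u * (penalty qSY qWU M1 M2 J2 s y w u)⁻¹ ≤
      qSY.p (s, y) * (M1 * J2 * selectBound qSY qWU M1 M2 J2 s y (w, u)) := by
  rcases (mul_nonneg (qSY.nonneg (s, y)) ((qWU s).nonneg (w, u))).eq_or_lt with h0 | h
  · rw [qHB, ← h0, zero_mul]
    refine mul_nonneg (qSY.nonneg _) (mul_nonneg (by positivity) ?_)
    exact mul_nonneg (mul_nonneg (condS_nonneg qSY qWU s _) (condY_nonneg qSY qWU y _))
      (div_nonneg (mWU_nonneg qSY qWU w u) (mul_nonneg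
        ((condS_nonneg qSY qWU s _).trans (condS_le_encNormalizerBound qSY qWU M1 J2 s _))
        ((condY_nonneg qSY qWU y _).trans (condY_le_decNormalizerBound qSY qWU M2 J2 y _))))
  obtain ⟨hS, -, -, hSWU, hWU, hYUW, -⟩ := marginals_pos_of_qHB_pos qSY qWU h
  have hA : 0 < 1 + (M1 : ℝ)⁻¹ * (2 : ℝ) ^ (iSW qSY qWU s w)
      + ((M1 : ℝ) * (J2 : ℝ))⁻¹ * (2 : ℝ) ^ (iSWU qSY qWU s w u) := by positivity
  have hB : 0 < 1 + (J2 : ℝ) * (M2 : ℝ)⁻¹ * (2 : ℝ) ^ (-(iYUcW qSY qWU y u w)) := by positivity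
  refine le_of_eq ?_
  rw [penalty, selectBound, encNormalizerBound_eq_of_qHB_pos qSY qWU M1 J2 h,
    decNormalizerBound_eq_of_qHB_pos qSY qWU M2 J2 h, condS, condY]
  simp only [qHB, mSWU] at hSWU ⊢
  have : (M1 : ℝ) ≠ 0 := NeZero.ne _
  have : (J2 : ℝ) ≠ 0 := NeZero.ne _
  field_simp

end InformationDensities

lemma sum_qHB_mul_inv_le (qSY : FinPMF (S × Y)) (qWU : S → FinPMF (W × U)) (M1 M2 J2 : ℕ)
    [NeZero M1] [NeZero M2] [NeZero J2] {φ : W × U → ℝ} (hφ : ∀ x, 0 ≤ φ x) (s : S) (y : Y) :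
    ∑ w, ∑ u, qHB qSY qWU s y w u * φ (w, u) * (penalty qSY qWU M1 M2 J2 s y w u)⁻¹ ≤
      qSY.p (s, y) * (M1 * J2 * ∑ x, φ x * selectBound qSY qWU M1 M2 J2 s y x) := by
  simp only [mul_sum, Fintype.sum_prod_type]
  refine sum_le_sum fun w _ => sum_le_sum fun u _ => ?_
  calc _ = φ (w, u) * (qHB qSY qWU s y w u * (penalty qSY qWU M1 M2 J2 s y w u)⁻¹) := by ring
    _ ≤ φ (w, u) * (qSY.p (s, y) * (M1 * J2 * selectBound qSY qWU M1 M2 J2 s y (w, u))) :=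
      mul_le_mul_of_nonneg_left (qHB_mul_inv_le_mul_selectBound qSY qWU M1 M2 J2 s y w u) (hφ _)
    _ = _ := by ring

theorem oneShot_heegard_berger_kaspi_general (qSY : FinPMF (S × Y))
    (qWU : S → FinPMF (W × U)) (d1 : S → R1 → ℝ) (d2 : S → R2 → ℝ)
    (D1 D2 : ℝ)
    (g1 : W → R1) (g2 : W → U → Y → R2)
    (M1 M2 J2 : ℕ) (hM1 : 0 < M1) (hM2 : 0 < M2) (hJ2 : M2 ≤ J2) :
    ∃ (enc : S → FinPMF (Fin (M1 * M2))) (dec1 : Fin (M1 * M2) → FinPMF R1)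
      (dec2 : Fin (M1 * M2) → Y → FinPMF R2),
      pNoExcessHB (M1 * M2) qSY d1 d2 D1 D2 enc dec1 dec2 ≥
        ∑ s : S, ∑ y : Y, ∑ w : W, ∑ u : U,
          qHB qSY qWU s y w u *
          ind (d1 s (g1 w) ≤ D1 ∧ d2 s (g2 w u y) ≤ D2) *
          ((1 + (M1 : ℝ)⁻¹ * (2 : ℝ) ^ (iSW qSY qWU s w)
              + ((M1 : ℝ) * (J2 : ℝ))⁻¹ * (2 : ℝ) ^ (iSWU qSY qWU s w u)) *
           (1 + (J2 : ℝ) * (M2 : ℝ)⁻¹ * (2 : ℝ) ^ (-(iYUcW qSY qWU y u w))))⁻¹ := by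
  obtain ⟨s₀, -⟩ := qSY.nonempty
  obtain ⟨-, u₀⟩ := (qWU s₀).nonempty
  have : Nonempty U := ⟨u₀⟩
  have : NeZero M1 := ⟨hM1.ne'⟩
  have : NeZero M2 := ⟨hM2.ne'⟩
  have : NeZero J2 := ⟨(hM2.trans_le hJ2).ne'⟩
  set C := codebook qSY qWU M1 M2 J2
  obtain ⟨θ, hθ⟩ := C.exists_expect_le fun θ => pNoExcessHB (M1 * M2) qSY d1 d2 D1 D2
    (encoder qSY qWU M1 M2 J2 θ) (decoder1 M1 M2 J2 g1 θ) (decoder2 qSY qWU M1 M2 J2 g2 θ)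
  refine ⟨_, _, _, le_trans ?_ hθ⟩
  have hφ : ∀ s y x, 0 ≤ noExcess d1 d2 D1 D2 g1 g2 s y x := fun _ _ _ => ind_nonneg _
  calc _ ≤ ∑ s, ∑ y, qSY.p (s, y) *
        (M1 * J2 * ∑ x, noExcess d1 d2 D1 D2 g1 g2 s y x * selectBound qSY qWU M1 M2 J2 s y x) :=
        sum_le_sum fun s _ => sum_le_sum fun y _ =>
          sum_qHB_mul_inv_le qSY qWU M1 M2 J2 (hφ s y) s y
    _ ≤ ∑ s, ∑ y, qSY.p (s, y) * ∑ i, ∑ j, C.expect (fun θ =>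
        selectProb qSY qWU M1 M2 J2 θ s y i j * noExcess d1 d2 D1 D2 g1 g2 s y (slot (θ.1 i) j)) :=
        sum_le_sum fun s _ => sum_le_sum fun y _ => mul_le_mul_of_nonneg_left
          (sum_selectBound_le_expect qSY qWU M1 M2 J2 (hφ s y) s y) (qSY.nonneg _)
    _ = C.expect (fun θ => ∑ s, ∑ y, qSY.p (s, y) * ∑ i, ∑ j,
        selectProb qSY qWU M1 M2 J2 θ s y i j * noExcess d1 d2 D1 D2 g1 g2 s y (slot (θ.1 i) j)) := by
        simp only [FinPMF.expect_sum, FinPMF.expect_const_mul]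
    _ ≤ _ := C.expect_mono fun θ =>
        sum_selectProb_le_pNoExcessHB qSY qWU M1 M2 J2 d1 d2 D1 D2 g1 g2 θ

/-- One-shot Heegard–Berger/Kaspi achievability (with `M = M₁ M₂`, `J₂ ≥ M₂`). -/
theorem oneShot_heegard_berger_kaspi (qSY : FinPMF (S × Y))
    (qWU : S → FinPMF (W × U)) (d1 : S → R1 → ℝ) (d2 : S → R2 → ℝ)
    (hd1 : ∀ s r, 0 ≤ d1 s r) (hd2 : ∀ s r, 0 ≤ d2 s r)
    (D1 D2 : ℝ) (hD1 : 0 ≤ D1) (hD2 : 0 ≤ D2)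
    (g1 : W → R1) (g2 : W → U → Y → R2)
    (M1 M2 J2 : ℕ) (hM1 : 0 < M1) (hM2 : 0 < M2) (hJ2 : M2 ≤ J2) :
    ∃ (enc : S → FinPMF (Fin (M1 * M2))) (dec1 : Fin (M1 * M2) → FinPMF R1)
      (dec2 : Fin (M1 * M2) → Y → FinPMF R2),
      pNoExcessHB (M1 * M2) qSY d1 d2 D1 D2 enc dec1 dec2 ≥
        ∑ s : S, ∑ y : Y, ∑ w : W, ∑ u : U,
          qHB qSY qWU s y w u *
          ind (d1 s (g1 w) ≤ D1 ∧ d2 s (g2 w u y) ≤ D2) *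
          ((1 + (M1 : ℝ)⁻¹ * (2 : ℝ) ^ (iSW qSY qWU s w)
              + ((M1 : ℝ) * (J2 : ℝ))⁻¹ * (2 : ℝ) ^ (iSWU qSY qWU s w u)) *
           (1 + (J2 : ℝ) * (M2 : ℝ)⁻¹ * (2 : ℝ) ^ (-(iYUcW qSY qWU y u w))))⁻¹ :=
  oneShot_heegard_berger_kaspi_general qSY qWU d1 d2 D1 D2 g1 g2 M1 M2 J2 hM1 hM2 hJ2
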